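/- Let A be an ε-compatible family of affine maps over E ⊂ ℝⁿ. Then for all x, y ∈ E and r, s > 0, ‖A'_{x,r} − A'_{y,s}‖ ≤ T_ε(τ)·ε·min(‖A'_{x,r}‖, ‖A'_{y,s}‖), where τ = max(r, s, 2|x−y|)/min(r,s) and T_ε(t) = (2 log₂ t + 1) t^{2 log₂(1+ε)}. -/

import Mathlib

/-!
Let `R = max(r, s, 2|x − y|)`. Doubling `r` at `x` and `s` at `y` until they land in `(R/2, R]`
takes `k, k' ≤ log₂ τ` steps, each an instance of compatibility, and the two top scales are
compatible with each other. Along this chain of `k + k' + 1` relatively `ε`-close maps every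
norm is within a factor `(1 + ε)^(k + k') ≤ τ^(2 log₂(1 + ε))` of both endpoint norms, so
telescoping over the chain gives the estimate.
-/

open Metric

/-- `T_ε(t) = (2 log₂ t + 1)·t^{2 log₂(1+ε)}`. -/
noncomputable def Tfun (ε t : ℝ) : ℝ :=
  (2 * Real.logb 2 t + 1) * t ^ (2 * Real.logb 2 (1 + ε))

/-- An `ε`-compatible family of affine maps over `E ⊆ ℝⁿ`. -/
def IsCompatibleFamily (n N : ℕ) (E : Set (EuclideanSpace ℝ (Fin n)))
    (A : EuclideanSpace ℝ (Fin n) → ℝ →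
      ContinuousAffineMap ℝ (EuclideanSpace ℝ (Fin n)) (EuclideanSpace ℝ (Fin N)))
    (ε : ℝ) : Prop :=
  ∀ x ∈ E, ∀ y ∈ E, ∀ r s : ℝ, 0 < r → 0 < s →
    dist x y ≤ max r s → 1 / 2 ≤ r / s → r / s ≤ 2 →
    ‖(A x r).contLinear - (A y s).contLinear‖ ≤
      ε * min ‖(A x r).contLinear‖ ‖(A y s).contLinear‖

def RelClose {V : Type*} [SeminormedAddCommGroup V] (ε : ℝ) (a b : V) : Prop :=
  ‖a - b‖ ≤ ε * min ‖a‖ ‖b‖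

namespace RelClose

variable {V : Type*} [SeminormedAddCommGroup V] {ε : ℝ} {a b : V}

theorem symm (h : RelClose ε a b) : RelClose ε b a := by
  rwa [RelClose, norm_sub_rev, min_comm]

theorem norm_le (hε : 0 ≤ ε) (h : RelClose ε a b) : ‖a‖ ≤ (1 + ε) * ‖b‖ := by
  have hmin : ε * min ‖a‖ ‖b‖ ≤ ε * ‖b‖ := mul_le_mul_of_nonneg_left (min_le_right _ _) hε
  linarith [norm_le_norm_sub_add a b, h.trans hmin]

end RelClose

section Chain

variable {V : Type*} [SeminormedAddCommGroup V] {ε : ℝ} {f : ℕ → V} {n : ℕ}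

theorem norm_le_pow_mul_of_relClose_chain (hε : 0 ≤ ε)
    (hf : ∀ i < n, RelClose ε (f i) (f (i + 1))) {i m : ℕ} (him : i + m ≤ n) :
    ‖f (i + m)‖ ≤ (1 + ε) ^ m * ‖f i‖ ∧ ‖f i‖ ≤ (1 + ε) ^ m * ‖f (i + m)‖ := by
  induction m with
  | zero => simp
  | succ m ih =>
    obtain ⟨ih_up, ih_down⟩ := ih (by omega)
    have hlink := hf (i + m) (by omega)
    have h1ε : 0 ≤ 1 + ε := by linarith
    constructor
    · calc ‖f (i + (m + 1))‖ ≤ (1 + ε) * ‖f (i + m)‖ := hlink.symm.norm_le hε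
        _ ≤ (1 + ε) * ((1 + ε) ^ m * ‖f i‖) := by gcongr
        _ = (1 + ε) ^ (m + 1) * ‖f i‖ := by ring
    · calc ‖f i‖ ≤ (1 + ε) ^ m * ‖f (i + m)‖ := ih_down
        _ ≤ (1 + ε) ^ m * ((1 + ε) * ‖f (i + m + 1)‖) := by gcongr; exact hlink.norm_le hε
        _ = (1 + ε) ^ (m + 1) * ‖f (i + (m + 1))‖ := by ring_nf

/-- Every norm along the chain is within a factor `(1 + ε) ^ L` of both endpoint norms. -/
theorem norm_sub_le_of_relClose_chain (hε : 0 ≤ ε) {L : ℕ}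
    (hf : ∀ i < L + 1, RelClose ε (f i) (f (i + 1))) :
    ‖f 0 - f (L + 1)‖ ≤ ((L + 1) * (1 + ε) ^ L) * ε * min ‖f 0‖ ‖f (L + 1)‖ := by
  have hpow : ∀ {j}, j ≤ L → (1 + ε) ^ j ≤ (1 + ε) ^ L := fun hj =>
    pow_le_pow_right₀ (by linarith) hj
  have hstep : ∀ {i}, i < L + 1 →
      dist (f i) (f (i + 1)) ≤ ε * (1 + ε) ^ L * min ‖f 0‖ ‖f (L + 1)‖ := by
    intro i hi
    have from_start : ‖f i‖ ≤ (1 + ε) ^ L * ‖f 0‖ := by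
      have := (norm_le_pow_mul_of_relClose_chain hε hf (i := 0) (m := i) (by omega)).1
      rw [zero_add] at this
      exact this.trans (mul_le_mul_of_nonneg_right (hpow (by omega)) (norm_nonneg _))
    have from_end : ‖f (i + 1)‖ ≤ (1 + ε) ^ L * ‖f (L + 1)‖ := by
      have := (norm_le_pow_mul_of_relClose_chain hε hf (i := i + 1) (m := L - i) (by omega)).2
      rw [show i + 1 + (L - i) = L + 1 by omega] at this
      exact this.trans (mul_le_mul_of_nonneg_right (hpow (by omega)) (norm_nonneg _))
    calc dist (f i) (f (i + 1)) ≤ ε * min ‖f i‖ ‖f (i + 1)‖ :=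
          (dist_eq_norm _ _).trans_le (hf i hi)
      _ ≤ ε * min ((1 + ε) ^ L * ‖f 0‖) ((1 + ε) ^ L * ‖f (L + 1)‖) := by gcongr
      _ = ε * (1 + ε) ^ L * min ‖f 0‖ ‖f (L + 1)‖ := by
        rw [mul_assoc, ← mul_min_of_nonneg _ _ (by positivity : (0 : ℝ) ≤ (1 + ε) ^ L)]
  calc ‖f 0 - f (L + 1)‖ = dist (f 0) (f (L + 1)) := (dist_eq_norm _ _).symm
    _ ≤ ∑ _i ∈ Finset.range (L + 1), ε * (1 + ε) ^ L * min ‖f 0‖ ‖f (L + 1)‖ :=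
      dist_le_range_sum_of_dist_le (L + 1) hstep
    _ = ((L + 1) * (1 + ε) ^ L) * ε * min ‖f 0‖ ‖f (L + 1)‖ := by
      rw [Finset.sum_const, Finset.card_range, nsmul_eq_mul]; push_cast; ring

end Chain

theorem Real.rpow_mul_logb_comm {a b : ℝ} (d c : ℝ) (ha : 0 < a) (hb : 0 < b) :
    a ^ (c * Real.logb d b) = b ^ (c * Real.logb d a) := by
  rw [Real.rpow_def_of_pos ha, Real.rpow_def_of_pos hb, Real.logb, Real.logb]
  ring_nf

theorem add_one_mul_pow_le_Tfun {ε t : ℝ} {m : ℕ} (hε : 0 ≤ ε) (ht : 0 < t)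
    (hm : (m : ℝ) ≤ 2 * Real.logb 2 t) : (m + 1) * (1 + ε) ^ m ≤ Tfun ε t := by
  have hpow : (1 + ε) ^ m ≤ t ^ (2 * Real.logb 2 (1 + ε)) := by
    rw [← Real.rpow_natCast, ← Real.rpow_mul_logb_comm 2 2 (by linarith) ht]
    exact Real.rpow_le_rpow_of_exponent_le (by linarith) hm
  unfold Tfun
  gcongr
  linarith [m.cast_nonneg (α := ℝ)]

theorem exists_two_pow_mul_mem_Ioc {r R : ℝ} (hr : 0 < r) (hrR : r ≤ R) :
    ∃ k : ℕ, 2 ^ k * r ∈ Set.Ioc (R / 2) R ∧ (k : ℝ) ≤ Real.logb 2 (R / r) := by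
  obtain ⟨k, hle, hlt⟩ := exists_nat_pow_near ((one_le_div hr).mpr hrR) one_lt_two
  refine ⟨k, ⟨?_, (le_div_iff₀ hr).mp hle⟩, ?_⟩
  · rw [pow_succ, div_lt_iff₀ hr] at hlt
    linarith
  · rw [Real.le_logb_iff_rpow_le one_lt_two (div_pos (hr.trans_le hrR) hr), Real.rpow_natCast]
    exact hle

/-- The path `(x, r), (x, 2r), …, (x, 2ᵏr), (y, 2ᵏ's), …, (y, 2s), (y, s)` of scales, through
the family `A`. -/
noncomputable def dyadicChain {n N : ℕ}
    (A : EuclideanSpace ℝ (Fin n) → ℝ →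
      ContinuousAffineMap ℝ (EuclideanSpace ℝ (Fin n)) (EuclideanSpace ℝ (Fin N)))
    (x y : EuclideanSpace ℝ (Fin n)) (r s : ℝ) (k k' : ℕ) (i : ℕ) :
    EuclideanSpace ℝ (Fin n) →L[ℝ] EuclideanSpace ℝ (Fin N) :=
  if i ≤ k then (A x (2 ^ i * r)).contLinear else (A y (2 ^ (k + k' + 1 - i) * s)).contLinear

section DyadicChain

variable {n N : ℕ}
  {A : EuclideanSpace ℝ (Fin n) → ℝ →
    ContinuousAffineMap ℝ (EuclideanSpace ℝ (Fin n)) (EuclideanSpace ℝ (Fin N))}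
  {x y : EuclideanSpace ℝ (Fin n)} {r s : ℝ} {k k' : ℕ}

theorem dyadicChain_zero : dyadicChain A x y r s k k' 0 = (A x r).contLinear := by
  simp [dyadicChain]

theorem dyadicChain_last : dyadicChain A x y r s k k' (k + k' + 1) = (A y s).contLinear := by
  simp [dyadicChain]

end DyadicChain

namespace IsCompatibleFamily

variable {n N : ℕ} {E : Set (EuclideanSpace ℝ (Fin n))}
  {A : EuclideanSpace ℝ (Fin n) → ℝ →
    ContinuousAffineMap ℝ (EuclideanSpace ℝ (Fin n)) (EuclideanSpace ℝ (Fin N))}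
  {ε : ℝ} {x y : EuclideanSpace ℝ (Fin n)}

theorem relClose_two_mul (hA : IsCompatibleFamily n N E A ε) (hx : x ∈ E) {ρ : ℝ}
    (hρ : 0 < ρ) : RelClose ε (A x (2 * ρ)).contLinear (A x ρ).contLinear := by
  have hratio : 2 * ρ / ρ = 2 := by field_simp
  exact hA x hx x hx (2 * ρ) ρ (by positivity) hρ (by rw [dist_self]; positivity)
    (by rw [hratio]; norm_num) hratio.le

theorem relClose_of_mem_Ioc (hA : IsCompatibleFamily n N E A ε) (hx : x ∈ E) (hy : y ∈ E)
    {R a b : ℝ} (ha : a ∈ Set.Ioc (R / 2) R) (hb : b ∈ Set.Ioc (R / 2) R)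
    (hxy : 2 * dist x y ≤ R) : RelClose ε (A x a).contLinear (A y b).contLinear := by
  obtain ⟨ha₁, ha₂⟩ := ha
  obtain ⟨hb₁, hb₂⟩ := hb
  have hR : 0 < R := by linarith [dist_nonneg (x := x) (y := y)]
  have hb₀ : 0 < b := by linarith
  refine hA x hx y hy a b (by linarith) hb₀ ?_ ?_ ?_
  · linarith [le_max_left a b]
  · rw [le_div_iff₀ hb₀]; linarith
  · rw [div_le_iff₀ hb₀]; linarith

theorem relClose_dyadicChain (hA : IsCompatibleFamily n N E A ε) (hx : x ∈ E) (hy : y ∈ E)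
    {r s R : ℝ} (hr : 0 < r) (hs : 0 < s) {k k' : ℕ}
    (hk : 2 ^ k * r ∈ Set.Ioc (R / 2) R) (hk' : 2 ^ k' * s ∈ Set.Ioc (R / 2) R)
    (hxy : 2 * dist x y ≤ R) :
    ∀ i < k + k' + 1,
      RelClose ε (dyadicChain A x y r s k k' i) (dyadicChain A x y r s k k' (i + 1)) := by
  intro i hi
  unfold dyadicChain
  rcases lt_trichotomy i k with hik | rfl | hki
  · rw [if_pos hik.le, if_pos (Nat.succ_le_of_lt hik), pow_succ, mul_comm _ 2, mul_assoc]
    exact (hA.relClose_two_mul hx (by positivity)).symm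
  · rw [if_pos le_rfl, if_neg (by omega), show i + k' + 1 - (i + 1) = k' by omega]
    exact hA.relClose_of_mem_Ioc hx hy hk hk' hxy
  · rw [if_neg (by omega), if_neg (by omega),
      show k + k' + 1 - i = k + k' + 1 - (i + 1) + 1 by omega, pow_succ, mul_comm _ 2, mul_assoc]
    exact hA.relClose_two_mul hy (by positivity)

end IsCompatibleFamily

/-- If `A` is an `ε`-compatible family over `E`, then for all `x, y ∈ E` and
`r, s > 0`, `‖A'_{x,r} − A'_{y,s}‖ ≤ T_ε(τ)·ε·min(‖A'_{x,r}‖, ‖A'_{y,s}‖)` where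
`τ = max(r, s, 2|x−y|)/min(r,s)`. -/
theorem compatible_family_general_estimate (n N : ℕ) (E : Set (EuclideanSpace ℝ (Fin n)))
    (A : EuclideanSpace ℝ (Fin n) → ℝ →
      ContinuousAffineMap ℝ (EuclideanSpace ℝ (Fin n)) (EuclideanSpace ℝ (Fin N)))
    (ε : ℝ) (hε : 0 < ε) (hA : IsCompatibleFamily n N E A ε) :
    ∀ x ∈ E, ∀ y ∈ E, ∀ r s : ℝ, 0 < r → 0 < s →
      ‖(A x r).contLinear - (A y s).contLinear‖ ≤
        Tfun ε (max (max r s) (2 * dist x y) / min r s) * ε *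
          min ‖(A x r).contLinear‖ ‖(A y s).contLinear‖ := by
  intro x hx y hy r s hr hs
  set R := max (max r s) (2 * dist x y)
  have hsR : s ≤ R := (le_max_right r s).trans (le_max_left _ _)
  have hR : 0 < R := hs.trans_le hsR
  obtain ⟨k, hk, hk_log⟩ :=
    exists_two_pow_mul_mem_Ioc hr ((le_max_left r s).trans (le_max_left _ _))
  obtain ⟨k', hk', hk'_log⟩ := exists_two_pow_mul_mem_Ioc hs hsR
  have hchain := norm_sub_le_of_relClose_chain hε.le
    (hA.relClose_dyadicChain hx hy hr hs hk hk' (le_max_right _ _))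
  rw [dyadicChain_zero, dyadicChain_last] at hchain
  have hmin : 0 < min r s := lt_min hr hs
  have hlog_le {t : ℝ} (ht : min r s ≤ t) : Real.logb 2 (R / t) ≤ Real.logb 2 (R / min r s) :=
    Real.logb_le_logb_of_le one_lt_two (div_pos hR (hmin.trans_le ht))
      (div_le_div_of_nonneg_left hR.le hmin ht)
  have hlog : ((k + k' : ℕ) : ℝ) ≤ 2 * Real.logb 2 (R / min r s) := by
    push_cast
    linarith [hk_log.trans (hlog_le (min_le_left r s)),
      hk'_log.trans (hlog_le (min_le_right r s))]
  calc ‖(A x r).contLinear - (A y s).contLinear‖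
      ≤ (((k + k' : ℕ) : ℝ) + 1) * (1 + ε) ^ (k + k') * ε *
          min ‖(A x r).contLinear‖ ‖(A y s).contLinear‖ := hchain
    _ ≤ Tfun ε (R / min r s) * ε * min ‖(A x r).contLinear‖ ‖(A y s).contLinear‖ := by
      gcongr
      exact add_one_mul_pow_le_Tfun hε.le (div_pos hR hmin) hlog
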